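/- arXiv:2003.10848 — 3 statements merged into one kernel-verified Lean document; each statement's English description precedes it below -/
import Mathlib

section
/- For all real numbers a₁, a₂ and nonnegative reals b₁, b₂, the inequality |(a₁ - a₂)(b₁²a₁ - b₂²a₂) - (b₁a₁ - b₂a₂)²| ≤ (1/10)(b₁a₁ - b₂a₂)² + C(|a₂|² + |a₁||a₂|)(b₁ - b₂)² holds for some absolute constant C > 0 (e.g. C = 10 works). -/
theorem stmt0 :
    ∃ C : ℝ, 0 < C ∧ ∀ a₁ a₂ b₁ b₂ : ℝ, 0 ≤ b₁ → 0 ≤ b₂ →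
      |(a₁ - a₂) * (b₁ ^ 2 * a₁ - b₂ ^ 2 * a₂) - (b₁ * a₁ - b₂ * a₂) ^ 2|
        ≤ (1 / 10) * (b₁ * a₁ - b₂ * a₂) ^ 2
          + C * (|a₂| ^ 2 + |a₁| * |a₂|) * (b₁ - b₂) ^ 2 := by
  refine ⟨10, by norm_num, fun a₁ a₂ b₁ b₂ _ _ => ?_⟩
  have h : (a₁ - a₂) * (b₁ ^ 2 * a₁ - b₂ ^ 2 * a₂) - (b₁ * a₁ - b₂ * a₂) ^ 2
      = -(a₁ * a₂) * (b₁ - b₂) ^ 2 := by ring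
  rw [h, abs_mul, abs_neg, abs_mul, abs_sq]
  nlinarith [sq_nonneg (b₁ * a₁ - b₂ * a₂), sq_abs a₂, abs_nonneg a₁, abs_nonneg a₂,
    sq_nonneg (b₁ - b₂), mul_nonneg (mul_nonneg (abs_nonneg a₁) (abs_nonneg a₂)) (sq_nonneg (b₁ - b₂))]
end

section
/- For a₁ ≥ 0 > a₂ and b₁, b₂ ≥ 0, one has |(a₁ - a₂)(b₁²a₁⁺ - b₂²a₂⁺) - (b₁a₁ - b₂a₂)b₁a₁⁺| ≤ C|a₂|a₁⁺(b₁ - b₂)² + (1/10)(b₁a₁ - b₂a₂)b₁a₁⁺ for some absolute constant C > 0. -/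
theorem stmt3 :
    ∃ C : ℝ, 0 < C ∧ ∀ a₁ a₂ b₁ b₂ : ℝ, 0 ≤ a₁ → a₂ < 0 → 0 ≤ b₁ → 0 ≤ b₂ →
      |(a₁ - a₂) * (b₁ ^ 2 * max a₁ 0 - b₂ ^ 2 * max a₂ 0)
          - (b₁ * a₁ - b₂ * a₂) * b₁ * max a₁ 0|
        ≤ C * |a₂| * max a₁ 0 * (b₁ - b₂) ^ 2
          + (1 / 10) * ((b₁ * a₁ - b₂ * a₂) * b₁ * max a₁ 0) := by
  refine ⟨5, by norm_num, fun a₁ a₂ b₁ b₂ h1 h2 hb1 hb2 => ?_⟩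
  rw [max_eq_left h1, max_eq_right h2.le, abs_of_neg h2]
  have key : b₁ * |b₁ - b₂| ≤ 5 * (b₁ - b₂) ^ 2 + (1 / 10) * (b₁ * b₂) := by
    rcases abs_cases (b₁ - b₂) with ⟨h, _⟩ | ⟨h, h'⟩ <;> rw [h] <;> nlinarith [sq_nonneg (b₁ - b₂), sq_nonneg (b₁ - 2*b₂), mul_nonneg hb1 hb2]
  have h3 : 0 < -a₂ := by linarith
  have e : (a₁ - a₂) * (b₁ ^ 2 * a₁ - b₂ ^ 2 * 0) - (b₁ * a₁ - b₂ * a₂) * b₁ * a₁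
      = (b₁ * a₁) * (-a₂) * (b₁ - b₂) := by ring
  rw [e, abs_mul, abs_mul, abs_of_nonneg (mul_nonneg hb1 h1), abs_of_pos h3]
  nlinarith [mul_le_mul_of_nonneg_left key (mul_nonneg h1 h3.le),
    mul_nonneg (mul_nonneg hb1 hb1) (mul_nonneg h1 h1),
    abs_nonneg (b₁ - b₂), mul_nonneg h1 h3.le]
end

section
/- Let (U_k)_{k≥0} be a sequence of nonnegative reals satisfying U_k ≤ C·2^{βk}·λ^{-γ}·U_{k-1}^{θ₁} + C·(2^k/λ)^{δ}·U_{k-1}^{θ₂} for all k ≥ 1, where C, β, γ, δ > 0 and θ₁, θ₂ > 1. Then there exists λ₀ ≥ 1 such that for all λ ≥ λ₀ with U₀ ≤ 1, the sequence U_k converges to 0 as k → ∞. -/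
open Real Filter

set_option maxHeartbeats 1000000

theorem stmt5 (C β γ δ θ₁ θ₂ : ℝ) (hC : 0 < C) (hβ : 0 < β) (hγ : 0 < γ)
    (hδ : 0 < δ) (hθ₁ : 1 < θ₁) (hθ₂ : 1 < θ₂) :
    ∃ lam₀ : ℝ, 1 ≤ lam₀ ∧ ∀ lam : ℝ, lam₀ ≤ lam →
      ∀ U : ℕ → ℝ, (∀ k, 0 ≤ U k) → U 0 ≤ 1 →
        (∀ k : ℕ, 1 ≤ k →
          U k ≤ C * 2 ^ (β * k) * lam ^ (-γ) * (U (k - 1)) ^ θ₁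
                + C * (2 ^ (k : ℝ) / lam) ^ δ * (U (k - 1)) ^ θ₂) →
        Tendsto U atTop (nhds 0) := by
  set θ := min θ₁ θ₂ with hθdef
  have hθ : 1 < θ := lt_min hθ₁ hθ₂
  set B := max β δ with hBdef
  have hB0 : 0 < B := lt_max_of_lt_left hβ
  set m := min γ δ with hmdef
  have hm0 : 0 < m := lt_min hγ hδ
  set α := B / (θ - 1) + 1 with hαdef
  have hα0 : 0 < α := by
    have h : 0 < B / (θ - 1) := div_pos hB0 (by linarith)
    rw [hαdef]; linarith
  set K := 2 * C * (2 : ℝ) ^ (α * θ) with hKdef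
  have hK0 : 0 < K := by
    have : (0:ℝ) < (2 : ℝ) ^ (α * θ) := rpow_pos_of_pos two_pos _
    positivity
  refine ⟨max 1 (K ^ (1 / m)), le_max_left _ _, ?_⟩
  intro lam hlam U hU hU0 hrec
  have hlam1 : 1 ≤ lam := le_trans (le_max_left _ _) hlam
  have hlam0 : 0 < lam := by linarith
  have hlamK : K ≤ lam ^ m := by
    have h1 : K ^ (1 / m) ≤ lam := le_trans (le_max_right _ _) hlam
    have h2 : (K ^ (1 / m)) ^ m ≤ lam ^ m :=
      rpow_le_rpow (rpow_nonneg hK0.le _) h1 hm0.le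
    rwa [← rpow_mul hK0.le, one_div_mul_cancel hm0.ne', rpow_one] at h2
  have main : ∀ k : ℕ, U k ≤ (2 : ℝ) ^ (-(α * k)) := by
    intro k
    induction k with
    | zero => simpa using hU0
    | succ n ih =>
      have hrec' := hrec (n + 1) (Nat.le_add_left 1 n)
      simp only [Nat.add_sub_cancel] at hrec'
      have hxn0 : (0:ℝ) ≤ α * n := by positivity
      have hx0 : 0 ≤ U n := hU n
      -- bound U n ^ θ₁ and U n ^ θ₂ by 2 ^ (-(α*n)*θ)
      have hb : ∀ t : ℝ, θ ≤ t → U n ^ t ≤ (2:ℝ) ^ (-(α * n) * θ) := by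
        intro t ht
        have h1 : U n ^ t ≤ ((2:ℝ) ^ (-(α * n))) ^ t :=
          rpow_le_rpow hx0 ih (by linarith)
        have h2 : ((2:ℝ) ^ (-(α * n))) ^ t = (2:ℝ) ^ (-(α * n) * t) := by
          rw [← rpow_mul (by norm_num)]
        have h3 : (2:ℝ) ^ (-(α * n) * t) ≤ (2:ℝ) ^ (-(α * n) * θ) := by
          apply rpow_le_rpow_of_exponent_le one_le_two
          exact mul_le_mul_of_nonpos_left ht (by linarith)
        calc U n ^ t ≤ ((2:ℝ) ^ (-(α * n))) ^ t := h1
          _ = (2:ℝ) ^ (-(α * n) * t) := h2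
          _ ≤ _ := h3
      have hbθ₁ := hb θ₁ (min_le_left _ _)
      have hbθ₂ := hb θ₂ (min_le_right _ _)
      have hxθ₁0 : 0 ≤ U n ^ θ₁ := rpow_nonneg hx0 _
      have hxθ₂0 : 0 ≤ U n ^ θ₂ := rpow_nonneg hx0 _
      have hk1 : (0:ℝ) ≤ (n:ℝ) + 1 := by positivity
      -- bound term 1
      have h2β : (2:ℝ) ^ (β * (↑(n+1):ℝ)) ≤ (2:ℝ) ^ (B * ((n:ℝ) + 1)) := by
        apply rpow_le_rpow_of_exponent_le one_le_two
        push_cast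
        exact mul_le_mul_of_nonneg_right (le_max_left β δ) (by positivity)
      have hlγ : lam ^ (-γ) ≤ lam ^ (-m) := by
        apply rpow_le_rpow_of_exponent_le hlam1
        have := min_le_left γ δ
        linarith
      have ht1 : C * 2 ^ (β * (↑(n+1):ℝ)) * lam ^ (-γ) * U n ^ θ₁ ≤
          C * (2:ℝ) ^ (B * ((n:ℝ) + 1)) * lam ^ (-m) * (2:ℝ) ^ (-(α * n) * θ) := by
        have p1 : (0:ℝ) ≤ (2:ℝ) ^ (β * (↑(n+1):ℝ)) := (rpow_pos_of_pos two_pos _).le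
        have p2 : (0:ℝ) ≤ lam ^ (-γ) := (rpow_pos_of_pos hlam0 _).le
        have p3 : (0:ℝ) ≤ lam ^ (-m) := (rpow_pos_of_pos hlam0 _).le
        have p4 : (0:ℝ) ≤ (2:ℝ) ^ (B * ((n:ℝ) + 1)) := (rpow_pos_of_pos two_pos _).le
        gcongr
      -- bound term 2
      have hsplit : ((2:ℝ) ^ ((↑(n+1):ℝ)) / lam) ^ δ =
          (2:ℝ) ^ ((↑(n+1):ℝ) * δ) * lam ^ (-δ) := by
        rw [div_rpow (rpow_pos_of_pos two_pos _).le hlam0.le,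
          ← rpow_mul (by norm_num), rpow_neg hlam0.le, div_eq_mul_inv]
      have h2δ : (2:ℝ) ^ ((↑(n+1):ℝ) * δ) ≤ (2:ℝ) ^ (B * ((n:ℝ) + 1)) := by
        apply rpow_le_rpow_of_exponent_le one_le_two
        push_cast
        rw [mul_comm]
        exact mul_le_mul_of_nonneg_right (le_max_right β δ) (by positivity)
      have hlδ : lam ^ (-δ) ≤ lam ^ (-m) := by
        apply rpow_le_rpow_of_exponent_le hlam1
        have := min_le_right γ δ
        linarith
      have ht2 : C * ((2:ℝ) ^ ((↑(n+1):ℝ)) / lam) ^ δ * U n ^ θ₂ ≤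
          C * (2:ℝ) ^ (B * ((n:ℝ) + 1)) * lam ^ (-m) * (2:ℝ) ^ (-(α * n) * θ) := by
        rw [hsplit]
        have p3 : (0:ℝ) ≤ lam ^ (-δ) := (rpow_pos_of_pos hlam0 _).le
        have p4 : (0:ℝ) ≤ (2:ℝ) ^ (B * ((n:ℝ) + 1)) := (rpow_pos_of_pos two_pos _).le
        calc C * ((2:ℝ) ^ ((↑(n+1):ℝ) * δ) * lam ^ (-δ)) * U n ^ θ₂
            = C * (2:ℝ) ^ ((↑(n+1):ℝ) * δ) * lam ^ (-δ) * U n ^ θ₂ := by ring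
          _ ≤ C * (2:ℝ) ^ (B * ((n:ℝ) + 1)) * lam ^ (-m) * (2:ℝ) ^ (-(α * n) * θ) := by
              gcongr
      -- combine
      have hsum : U (n + 1) ≤
          2 * C * (2:ℝ) ^ (B * ((n:ℝ) + 1) + -(α * n) * θ) * lam ^ (-m) := by
        have := hrec'.trans (add_le_add ht1 ht2)
        rw [rpow_add two_pos]
        calc U (n + 1) ≤ _ := this
          _ = 2 * C * ((2:ℝ) ^ (B * ((n:ℝ) + 1)) * (2:ℝ) ^ (-(α * n) * θ)) * lam ^ (-m) := by
              ring
      -- final estimate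
      have hlamKpos : (0:ℝ) < lam ^ m := rpow_pos_of_pos hlam0 _
      have hstep : 2 * C * (2:ℝ) ^ (B * ((n:ℝ) + 1) + -(α * n) * θ) * lam ^ (-m) ≤
          (2:ℝ) ^ (-(α * ((n:ℝ) + 1))) := by
        have hαθ : α * (θ - 1) = B + (θ - 1) := by
          have hne : θ - 1 ≠ 0 := ne_of_gt (by linarith)
          rw [hαdef, add_mul, one_mul, div_mul_cancel₀ _ hne]
        have hexp : B * ((n:ℝ) + 1) + -(α * n) * θ - α * θ ≤ -(α * ((n:ℝ) + 1)) := by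
          have h1 : (0:ℝ) ≤ ((n:ℝ) + 1) * (θ - 1) :=
            mul_nonneg (by positivity) (by linarith)
          have h2 : ((n:ℝ) + 1) * (α * (θ - 1)) = ((n:ℝ) + 1) * (B + (θ - 1)) := by
            rw [hαθ]
          nlinarith [h1, h2]
        rw [rpow_neg hlam0.le, ← div_eq_mul_inv, div_le_iff₀ hlamKpos]
        have hmul : (2:ℝ) ^ (α * θ) * (2:ℝ) ^ (B * ((n:ℝ) + 1) + -(α * ↑n) * θ - α * θ)
            = (2:ℝ) ^ (B * ((n:ℝ) + 1) + -(α * ↑n) * θ) := by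
          rw [← rpow_add two_pos]; ring_nf
        have e1 : 2 * C * (2:ℝ) ^ (B * ((n:ℝ) + 1) + -(α * ↑n) * θ)
            = K * (2:ℝ) ^ (B * ((n:ℝ) + 1) + -(α * ↑n) * θ - α * θ) := by
          rw [hKdef]; linear_combination (-(2 * C)) * hmul
        rw [e1]
        have le1 : (2:ℝ) ^ (B * ((n:ℝ) + 1) + -(α * ↑n) * θ - α * θ)
            ≤ (2:ℝ) ^ (-(α * ((n:ℝ) + 1))) :=
          rpow_le_rpow_of_exponent_le one_le_two hexp
        calc K * (2:ℝ) ^ (B * ((n:ℝ) + 1) + -(α * ↑n) * θ - α * θ)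
            ≤ lam ^ m * (2:ℝ) ^ (-(α * ((n:ℝ) + 1))) :=
              mul_le_mul hlamK le1 (rpow_pos_of_pos two_pos _).le hlamKpos.le
          _ = (2:ℝ) ^ (-(α * ((n:ℝ) + 1))) * lam ^ m := by ring
        -- reorder
      calc U (n + 1) ≤ _ := hsum
        _ ≤ (2:ℝ) ^ (-(α * ((n:ℝ) + 1))) := hstep
        _ = (2:ℝ) ^ (-(α * (↑(n+1):ℝ))) := by push_cast; ring_nf
  -- conclude convergence
  have hlim : Tendsto (fun k : ℕ => (2:ℝ) ^ (-(α * (k:ℝ)))) atTop (nhds 0) := by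
    have heq : ∀ k : ℕ, (2:ℝ) ^ (-(α * (k:ℝ))) = ((2:ℝ) ^ (-α)) ^ k := by
      intro k
      rw [← rpow_natCast ((2:ℝ) ^ (-α)) k, ← rpow_mul (by norm_num)]
      ring_nf
    simp only [heq]
    apply tendsto_pow_atTop_nhds_zero_of_lt_one (rpow_pos_of_pos two_pos _).le
    exact rpow_lt_one_of_one_lt_of_neg one_lt_two (by linarith)
  exact squeeze_zero hU main hlim
end
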